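/- arXiv:1705.10434 — 3 statements merged into one kernel-verified Lean document; each statement's English description precedes it below -/
import Mathlib

section
/- Let 0 < R < 1 and ε > 0, and let c_τ : [R,1] → (0,∞), τ ∈ [−ε,ε], be a family of C^{1,1} functions, each satisfying the Herglotz condition, such that the maps (τ,r) ↦ c_τ(r) and (τ,r) ↦ ∂_r c_τ(r) are continuous on [−ε,ε] × [R,1]. Write ρ_τ(r) = r/c_τ(r). Then there is a constant C > 1 such that for all τ ∈ [−ε,ε] and all r, s ∈ (R,1) with s > r: (i) 1/C < c_τ(r) < C; (ii) (s − r)/C < ρ_τ(s) − ρ_τ(r) < C·(s − r); (iii) α_τ(r) < C; and (iv) L_τ(r) < C. -/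
/-- `c` is `C^{1,1}` on `[R,1]`: differentiable with Lipschitz derivative. -/
def IsC11On (c : ℝ → ℝ) (R : ℝ) : Prop :=
  ∃ c' : ℝ → ℝ, ∃ K : NNReal,
    (∀ r ∈ Set.Icc R 1, HasDerivWithinAt c (c' r) (Set.Icc R 1) r) ∧
    LipschitzOnWith K c' (Set.Icc R 1)

/-- The Herglotz condition: `d/dr (r / c r) > 0` on `[R,1]`. -/
def HerglotzCond (c : ℝ → ℝ) (R : ℝ) : Prop :=
  ∀ r ∈ Set.Icc R 1, 0 < derivWithin (fun s => s / c s) (Set.Icc R 1) r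

/-- Half length `L(r)` of the maximal geodesic of radius `r`. -/
noncomputable def Lfun (c : ℝ → ℝ) (r : ℝ) : ℝ :=
  ∫ s in r..1, (c s)⁻¹ * (Real.sqrt (1 - (r * c s / (s * c r)) ^ 2))⁻¹

/-- Half of the angular distance `α(r)` between the endpoints of the maximal geodesic
of radius `r`. -/
noncomputable def alphaFun (c : ℝ → ℝ) (r : ℝ) : ℝ :=
  ∫ s in r..1, (r * c s) / (c r * s ^ 2) * (Real.sqrt (1 - (r * c s / (s * c r)) ^ 2))⁻¹


open MeasureTheory intervalIntegral Set
lemma aux_sqrt_int (r : ℝ) (hr0 : 0 ≤ r) (hr1 : r ≤ 1) :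
    IntervalIntegrable (fun s => (Real.sqrt (s - r))⁻¹) volume r 1 ∧
    (∫ s in r..1, (Real.sqrt (s - r))⁻¹) ≤ 2 := by
  have heq : Set.EqOn (fun s => (s - r) ^ (-(1/2) : ℝ))
      (fun s => (Real.sqrt (s - r))⁻¹) (Set.Icc r 1) := by
    intro s hs
    have h0 : (0:ℝ) ≤ s - r := sub_nonneg.2 hs.1
    simp only
    rw [Real.rpow_neg h0, Real.sqrt_eq_rpow]
  have hint : IntervalIntegrable (fun s => (s - r) ^ (-(1/2) : ℝ)) volume r 1 := by
    have := (intervalIntegral.intervalIntegrable_rpow' (a := r - r) (b := 1 - r)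
      (r := -(1/2)) (by norm_num)).comp_sub_right r
    simpa using this
  constructor
  · exact (intervalIntegrable_iff_integrableOn_Ioc_of_le hr1).2
      ((((intervalIntegrable_iff_integrableOn_Ioc_of_le hr1).1 hint).congr_fun
        (fun s hs => heq (Ioc_subset_Icc_self hs)) measurableSet_Ioc))
  · rw [intervalIntegral.integral_congr (g := fun s => (s - r) ^ (-(1/2) : ℝ))
      (fun s hs => (heq (by rwa [Set.uIcc_of_le hr1] at hs)).symm)]
    have h1 : (∫ s in r..1, (s - r) ^ (-(1/2) : ℝ))
        = ∫ u in (r - r)..(1 - r), u ^ (-(1/2) : ℝ) :=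
      intervalIntegral.integral_comp_sub_right (fun u => u ^ (-(1/2) : ℝ)) r
    rw [h1, sub_self]
    rw [integral_rpow (Or.inl (by norm_num))]
    rw [Real.zero_rpow (by norm_num)]
    have h2 : (1 - r) ^ (-(1/2) + 1 : ℝ) ≤ 1 :=
      Real.rpow_le_one (by linarith) (by linarith) (by norm_num)
    rw [sub_zero, div_le_iff₀ (by norm_num)]
    linarith

lemma aux_integral_bound {r B a : ℝ} (hr0 : 0 < r) (hr1 : r < 1)
    {P q : ℝ → ℝ} (ha : 0 < a) (hB : 0 ≤ B)
    (hPc : ContinuousOn P (Set.Ioc r 1)) (hqc : ContinuousOn q (Set.Ioc r 1))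
    (hP : ∀ s ∈ Set.Ioc r 1, 0 ≤ P s ∧ P s ≤ B)
    (hq : ∀ s ∈ Set.Ioc r 1, a * (s - r) ≤ 1 - q s ^ 2)
    (hqr : (1:ℝ) - q r ^ 2 = 0) :
    (∫ s in r..1, P s * (Real.sqrt (1 - q s ^ 2))⁻¹) ≤ B * (Real.sqrt a)⁻¹ * 2 := by
  obtain ⟨hgI, hgV⟩ := aux_sqrt_int r hr0.le hr1.le
  set f : ℝ → ℝ := fun s => P s * (Real.sqrt (1 - q s ^ 2))⁻¹ with hf
  set g : ℝ → ℝ := fun s => B * (Real.sqrt a)⁻¹ * (Real.sqrt (s - r))⁻¹ with hg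
  have hsa : 0 < Real.sqrt a := Real.sqrt_pos.2 ha
  have hBnn : 0 ≤ B * (Real.sqrt a)⁻¹ := mul_nonneg hB (inv_nonneg.2 hsa.le)
  -- pointwise bound on Ioc
  have hbd : ∀ s ∈ Set.Ioc r 1, 0 ≤ f s ∧ f s ≤ g s := by
    intro s hs
    have hd0 : 0 < s - r := sub_pos.2 hs.1
    have h1 : 0 < a * (s - r) := mul_pos ha hd0
    have h2 : a * (s - r) ≤ 1 - q s ^ 2 := hq s hs
    have h3 : Real.sqrt (a * (s - r)) ≤ Real.sqrt (1 - q s ^ 2) := Real.sqrt_le_sqrt h2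
    have h4 : 0 < Real.sqrt (a * (s - r)) := Real.sqrt_pos.2 h1
    have h5 : (Real.sqrt (1 - q s ^ 2))⁻¹ ≤ (Real.sqrt (a * (s - r)))⁻¹ :=
      inv_anti₀ h4 h3
    have h6 : (Real.sqrt (a * (s - r)))⁻¹ = (Real.sqrt a)⁻¹ * (Real.sqrt (s - r))⁻¹ := by
      rw [Real.sqrt_mul ha.le, mul_inv]
    constructor
    · exact mul_nonneg (hP s hs).1 (inv_nonneg.2 (Real.sqrt_nonneg _))
    · calc f s ≤ B * (Real.sqrt (1 - q s ^ 2))⁻¹ :=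
            mul_le_mul_of_nonneg_right (hP s hs).2 (inv_nonneg.2 (Real.sqrt_nonneg _))
        _ ≤ B * ((Real.sqrt a)⁻¹ * (Real.sqrt (s - r))⁻¹) := by
            rw [← h6]
            exact mul_le_mul_of_nonneg_left h5 hB
        _ = g s := by rw [hg]; ring
  -- g is interval integrable
  have hgint : IntervalIntegrable g volume r 1 := (hgI.const_mul (B * (Real.sqrt a)⁻¹))
  -- f is interval integrable
  have hfc : ContinuousOn f (Set.Ioc r 1) := by
    apply hPc.mul
    apply ContinuousOn.inv₀
    · exact (Real.continuous_sqrt.comp_continuousOn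
        (continuousOn_const.sub (hqc.pow 2)))
    · intro s hs
      have := (hbd s hs)
      have hd0 : 0 < s - r := sub_pos.2 hs.1
      exact ne_of_gt (Real.sqrt_pos.2 (lt_of_lt_of_le (mul_pos ha hd0) (hq s hs)))
  have hfint : IntervalIntegrable f volume r 1 := by
    rw [intervalIntegrable_iff_integrableOn_Ioc_of_le hr1.le]
    apply Integrable.mono' ((intervalIntegrable_iff_integrableOn_Ioc_of_le hr1.le).1 hgint)
    · exact hfc.aestronglyMeasurable measurableSet_Ioc
    · refine (ae_restrict_iff' measurableSet_Ioc).2 (Filter.Eventually.of_forall ?_)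
      intro s hs
      rw [Real.norm_eq_abs, abs_of_nonneg (hbd s hs).1]
      exact (hbd s hs).2
  -- compare
  have hmono : (∫ s in r..1, f s) ≤ ∫ s in r..1, g s := by
    apply intervalIntegral.integral_mono_on hr1.le hfint hgint
    intro s hs
    rcases eq_or_lt_of_le hs.1 with heq | hlt
    · have : f s = 0 := by
        rw [hf]; simp only [← heq, hqr, Real.sqrt_zero, inv_zero, mul_zero]
      rw [this, hg]
      simp only [← heq, sub_self, Real.sqrt_zero, inv_zero, mul_zero]
      exact le_refl 0
    · exact (hbd s ⟨hlt, hs.2⟩).2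
  calc (∫ s in r..1, f s) ≤ ∫ s in r..1, g s := hmono
    _ = (B * (Real.sqrt a)⁻¹) * ∫ s in r..1, (Real.sqrt (s - r))⁻¹ := by
        rw [hg, intervalIntegral.integral_const_mul]
    _ ≤ (B * (Real.sqrt a)⁻¹) * 2 := mul_le_mul_of_nonneg_left hgV hBnn
    _ = B * (Real.sqrt a)⁻¹ * 2 := by ring

theorem stmt4 (R : ℝ) (hR0 : 0 < R) (hR1 : R < 1) (ε : ℝ) (hε : 0 < ε)
    (c : ℝ → ℝ → ℝ) (c' : ℝ → ℝ → ℝ)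
    (hpos : ∀ τ ∈ Set.Icc (-ε) ε, ∀ r ∈ Set.Icc R 1, 0 < c τ r)
    (hderiv : ∀ τ ∈ Set.Icc (-ε) ε, ∀ r ∈ Set.Icc R 1,
      HasDerivWithinAt (c τ) (c' τ r) (Set.Icc R 1) r)
    (hlip : ∀ τ ∈ Set.Icc (-ε) ε, ∃ K : NNReal, LipschitzOnWith K (c' τ) (Set.Icc R 1))
    (hHerg : ∀ τ ∈ Set.Icc (-ε) ε, HerglotzCond (c τ) R)
    (hc_cont : ContinuousOn (fun p : ℝ × ℝ => c p.1 p.2) (Set.Icc (-ε) ε ×ˢ Set.Icc R 1))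
    (hc'_cont : ContinuousOn (fun p : ℝ × ℝ => c' p.1 p.2) (Set.Icc (-ε) ε ×ˢ Set.Icc R 1)) :
    ∃ C : ℝ, 1 < C ∧ ∀ τ ∈ Set.Icc (-ε) ε,
      (∀ r ∈ Set.Ioo R 1,
        (1 / C < c τ r ∧ c τ r < C) ∧ alphaFun (c τ) r < C ∧ Lfun (c τ) r < C) ∧
      (∀ r ∈ Set.Ioo R 1, ∀ s ∈ Set.Ioo R 1, r < s →
        (s - r) / C < s / c τ s - r / c τ r ∧ s / c τ s - r / c τ r < C * (s - r)) := by
  have hKc : IsCompact (Set.Icc (-ε) ε ×ˢ Set.Icc R 1) := isCompact_Icc.prod isCompact_Icc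
  have hKne : (Set.Icc (-ε) ε ×ˢ Set.Icc R 1).Nonempty :=
    ⟨(0, R), Set.mk_mem_prod (show (0:ℝ) ∈ Set.Icc (-ε) ε from ⟨by linarith, hε.le⟩)
      (show R ∈ Set.Icc R 1 from ⟨le_refl R, hR1.le⟩)⟩
  -- min and max of c
  obtain ⟨p₁, hp₁K, hp₁⟩ := hKc.exists_isMinOn hKne hc_cont
  obtain ⟨p₂, hp₂K, hp₂⟩ := hKc.exists_isMaxOn hKne hc_cont
  set m := c p₁.1 p₁.2 with hmdef
  set M := c p₂.1 p₂.2 with hMdef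
  have hm0 : 0 < m := hpos p₁.1 hp₁K.1 p₁.2 hp₁K.2
  have hcm : ∀ τ ∈ Set.Icc (-ε) ε, ∀ r ∈ Set.Icc R 1, m ≤ c τ r := fun τ hτ r hr =>
    isMinOn_iff.mp hp₁ (τ, r) (Set.mk_mem_prod hτ hr)
  have hcM : ∀ τ ∈ Set.Icc (-ε) ε, ∀ r ∈ Set.Icc R 1, c τ r ≤ M := fun τ hτ r hr =>
    isMaxOn_iff.mp hp₂ (τ, r) (Set.mk_mem_prod hτ hr)
  have hM0 : 0 < M := lt_of_lt_of_le hm0 (hcM p₁.1 hp₁K.1 p₁.2 hp₁K.2)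
  -- the derivative of ρ_τ
  set φ : ℝ × ℝ → ℝ := fun p => (1 * c p.1 p.2 - p.2 * c' p.1 p.2) / c p.1 p.2 ^ 2 with hφdef
  have hφd : ∀ τ ∈ Set.Icc (-ε) ε, ∀ r ∈ Set.Icc R 1,
      HasDerivWithinAt (fun s => s / c τ s) (φ (τ, r)) (Set.Icc R 1) r := by
    intro τ hτ r hr
    exact (hasDerivWithinAt_id r (Set.Icc R 1)).div (hderiv τ hτ r hr)
      (ne_of_gt (hpos τ hτ r hr))
  have hφpos : ∀ p ∈ Set.Icc (-ε) ε ×ˢ Set.Icc R 1, 0 < φ p := by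
    intro p hp
    have h1 := hHerg p.1 hp.1 p.2 hp.2
    rwa [(hφd p.1 hp.1 p.2 hp.2).derivWithin (uniqueDiffOn_Icc hR1 p.2 hp.2)] at h1
  have hφcont : ContinuousOn φ (Set.Icc (-ε) ε ×ˢ Set.Icc R 1) := by
    apply ContinuousOn.div
    · exact (continuousOn_const.mul hc_cont).sub ((continuous_snd.continuousOn).mul hc'_cont)
    · exact hc_cont.pow 2
    · exact fun p hp => pow_ne_zero 2 (ne_of_gt (hpos p.1 hp.1 p.2 hp.2))
  obtain ⟨p₃, hp₃K, hp₃⟩ := hKc.exists_isMinOn hKne hφcont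
  obtain ⟨p₄, hp₄K, hp₄⟩ := hKc.exists_isMaxOn hKne hφcont
  set m₂ := φ p₃ with hm₂def
  set M₂ := φ p₄ with hM₂def
  have hm₂0 : 0 < m₂ := hφpos p₃ hp₃K
  have hM₂0 : 0 < M₂ := hφpos p₄ hp₄K
  have hφm : ∀ p ∈ Set.Icc (-ε) ε ×ˢ Set.Icc R 1, m₂ ≤ φ p := fun p hp =>
    isMinOn_iff.mp hp₃ p hp
  have hφM : ∀ p ∈ Set.Icc (-ε) ε ×ˢ Set.Icc R 1, φ p ≤ M₂ := fun p hp =>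
    isMaxOn_iff.mp hp₄ p hp
  -- MVT bounds for ρ
  have hρMVT : ∀ τ ∈ Set.Icc (-ε) ε, ∀ r ∈ Set.Icc R 1, ∀ s ∈ Set.Icc R 1, r ≤ s →
      m₂ * (s - r) ≤ s / c τ s - r / c τ r ∧ s / c τ s - r / c τ r ≤ M₂ * (s - r) := by
    intro τ hτ
    have hcont : ContinuousOn (fun x => x / c τ x) (Set.Icc R 1) :=
      fun x hx => (hφd τ hτ x hx).continuousWithinAt
    have hderivAt : ∀ x ∈ interior (Set.Icc R 1),
        HasDerivAt (fun x => x / c τ x) (φ (τ, x)) x := by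
      intro x hx
      rw [interior_Icc] at hx
      exact (hφd τ hτ x (Set.Ioo_subset_Icc_self hx)).hasDerivAt (Icc_mem_nhds hx.1 hx.2)
    have hdiff : DifferentiableOn ℝ (fun x => x / c τ x) (interior (Set.Icc R 1)) :=
      fun x hx => ((hderivAt x hx).differentiableAt).differentiableWithinAt
    intro r hr s hs hrs
    constructor
    · exact (convex_Icc R 1).mul_sub_le_image_sub_of_le_deriv hcont hdiff
        (fun x hx => by
          rw [(hderivAt x hx).deriv]
          exact hφm (τ, x) (Set.mk_mem_prod hτ (interior_subset hx))) r hr s hs hrs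
    · exact (convex_Icc R 1).image_sub_le_mul_sub_of_deriv_le hcont hdiff
        (fun x hx => by
          rw [(hderivAt x hx).deriv]
          exact hφM (τ, x) (Set.mk_mem_prod hτ (interior_subset hx))) r hr s hs hrs
  -- constants
  set a := m₂ * (R / M) * m ^ 2 with ha
  have ha0 : 0 < a := mul_pos (mul_pos hm₂0 (div_pos hR0 hM0)) (pow_pos hm0 2)
  have hsa0 : 0 < Real.sqrt a := Real.sqrt_pos.2 ha0
  have hKL0 : 0 < m⁻¹ * (Real.sqrt a)⁻¹ * 2 := by positivity
  have hKα0 : 0 < M / (m * R ^ 2) * (Real.sqrt a)⁻¹ * 2 := by positivity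
  set C := m⁻¹ + M + m₂⁻¹ + M₂ + m⁻¹ * (Real.sqrt a)⁻¹ * 2
    + M / (m * R ^ 2) * (Real.sqrt a)⁻¹ * 2 + 1 with hC
  have hminv : 0 < m⁻¹ := inv_pos.2 hm0
  have hm₂inv : 0 < m₂⁻¹ := inv_pos.2 hm₂0
  have hC1 : 1 < C := by rw [hC]; linarith
  have hC0 : 0 < C := lt_trans one_pos hC1
  have hCm : m⁻¹ < C := by rw [hC]; linarith
  have hCM : M < C := by rw [hC]; linarith
  have hCm₂ : m₂⁻¹ < C := by rw [hC]; linarith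
  have hCM₂ : M₂ < C := by rw [hC]; linarith
  have hCKL : m⁻¹ * (Real.sqrt a)⁻¹ * 2 < C := by rw [hC]; linarith
  have hCKα : M / (m * R ^ 2) * (Real.sqrt a)⁻¹ * 2 < C := by rw [hC]; linarith
  -- continuity of c τ
  have hccont : ∀ τ ∈ Set.Icc (-ε) ε, ContinuousOn (c τ) (Set.Icc R 1) :=
    fun τ hτ x hx => (hderiv τ hτ x hx).continuousWithinAt
  -- the key estimate on 1 - q^2
  have hqmain : ∀ τ ∈ Set.Icc (-ε) ε, ∀ r ∈ Set.Ioo R 1, ∀ s ∈ Set.Ioc r 1,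
      a * (s - r) ≤ 1 - (r * c τ s / (s * c τ r)) ^ 2 := by
    intro τ hτ r hr s hs
    have hrJ : r ∈ Set.Icc R 1 := ⟨hr.1.le, hr.2.le⟩
    have hsJ : s ∈ Set.Icc R 1 := ⟨(hr.1.trans hs.1).le, hs.2⟩
    have hr0' : 0 < r := hR0.trans hr.1
    have hs0' : 0 < s := hr0'.trans hs.1
    have hcr := hpos τ hτ r hrJ
    have hcs := hpos τ hτ s hsJ
    set u := r / c τ r with hu'
    set v := s / c τ s with hv'
    have hqeq : r * c τ s / (s * c τ r) = u / v := by
      rw [hu', hv']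
      field_simp
    have hu0 : 0 < u := div_pos hr0' hcr
    have hv0 : 0 < v := div_pos hs0' hcs
    have hu : R / M ≤ u := div_le_div₀ hr0'.le hr.1.le hcr (hcM τ hτ r hrJ)
    have hv : v ≤ 1 / m := div_le_div₀ zero_le_one hs.2 hm0 (hcm τ hτ s hsJ)
    have hd0 : 0 < s - r := sub_pos.2 hs.1
    have hlow := (hρMVT τ hτ r hrJ s hsJ hs.1.le).1
    have hvu0 : 0 ≤ v - u := le_trans (mul_pos hm₂0 hd0).le hlow
    have hmv : m ^ 2 * v ^ 2 ≤ 1 := by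
      have h1 : m * v ≤ 1 := by
        have h2 := mul_le_mul_of_nonneg_left hv hm0.le
        rwa [mul_one_div, div_self (ne_of_gt hm0)] at h2
      calc m ^ 2 * v ^ 2 = (m * v) * (m * v) := by ring
        _ ≤ 1 * 1 := mul_le_mul h1 h1 (mul_pos hm0 hv0).le zero_le_one
        _ = 1 := one_mul 1
    have hRM0 : 0 < R / M := div_pos hR0 hM0
    have h1 : m₂ * (s - r) * (R / M) ≤ (v - u) * u := mul_le_mul hlow hu hRM0.le hvu0
    have h2 : (v - u) * u ≤ (v - u) * (v + u) :=
      mul_le_mul_of_nonneg_left (by linarith) hvu0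
    have h3 : (m₂ * (s - r) * (R / M)) * (m ^ 2 * v ^ 2) ≤ (m₂ * (s - r) * (R / M)) * 1 :=
      mul_le_mul_of_nonneg_left hmv (mul_nonneg (mul_nonneg hm₂0.le hd0.le) hRM0.le)
    have h5 : a * (s - r) * v ^ 2 = (m₂ * (s - r) * (R / M)) * (m ^ 2 * v ^ 2) := by
      rw [ha]; ring
    have h6 : (v - u) * (v + u) = v ^ 2 - u ^ 2 := by ring
    have hkey : u ^ 2 ≤ (1 - a * (s - r)) * v ^ 2 := by
      have h7 : (1 - a * (s - r)) * v ^ 2 = v ^ 2 - a * (s - r) * v ^ 2 := by ring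
      rw [h7, h5]
      linarith [h1, h2, h3, h6]
    have hfrac : (u / v) ^ 2 ≤ 1 - a * (s - r) := by
      rw [div_pow, div_le_iff₀ (pow_pos hv0 2)]
      exact hkey
    rw [hqeq]
    linarith
  refine ⟨C, hC1, fun τ hτ => ⟨fun r hr => ?_, fun r hr s hs hrs => ?_⟩⟩
  · have hrJ : r ∈ Set.Icc R 1 := ⟨hr.1.le, hr.2.le⟩
    have hr0' : 0 < r := hR0.trans hr.1
    have hcr := hpos τ hτ r hrJ
    have hIocJ : Set.Ioc r 1 ⊆ Set.Icc R 1 := fun s hs => ⟨(hr.1.trans hs.1).le, hs.2⟩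
    have hq : ∀ s ∈ Set.Ioc r 1, a * (s - r) ≤ 1 - (r * c τ s / (s * c τ r)) ^ 2 :=
      fun s hs => hqmain τ hτ r hr s hs
    have hqr : (1:ℝ) - (r * c τ r / (r * c τ r)) ^ 2 = 0 := by
      rw [div_self (ne_of_gt (mul_pos hr0' hcr))]
      norm_num
    have hqc : ContinuousOn (fun s => r * c τ s / (s * c τ r)) (Set.Ioc r 1) := by
      apply ContinuousOn.div
      · exact continuousOn_const.mul ((hccont τ hτ).mono hIocJ)
      · exact continuousOn_id.mul continuousOn_const
      · intro s hs
        exact ne_of_gt (mul_pos (hr0'.trans hs.1) hcr)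
    constructor
    · constructor
      · -- 1/C < c τ r
        have h1 : 1 / C < m := by
          rw [div_lt_iff₀ hC0]
          have h2 := mul_lt_mul_of_pos_left hCm hm0
          rwa [mul_inv_cancel₀ (ne_of_gt hm0)] at h2
        exact lt_of_lt_of_le h1 (hcm τ hτ r hrJ)
      · exact lt_of_le_of_lt (hcM τ hτ r hrJ) hCM
    constructor
    · -- alphaFun bound
      have hPc : ContinuousOn (fun s => r * c τ s / (c τ r * s ^ 2)) (Set.Ioc r 1) := by
        apply ContinuousOn.div
        · exact continuousOn_const.mul ((hccont τ hτ).mono hIocJ)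
        · exact continuousOn_const.mul (continuousOn_pow 2)
        · intro s hs
          exact ne_of_gt (mul_pos hcr (pow_pos (hr0'.trans hs.1) 2))
      have hP : ∀ s ∈ Set.Ioc r 1, 0 ≤ r * c τ s / (c τ r * s ^ 2) ∧
          r * c τ s / (c τ r * s ^ 2) ≤ M / (m * R ^ 2) := by
        intro s hs
        have hcs := hpos τ hτ s (hIocJ hs)
        constructor
        · positivity
        · apply div_le_div₀ hM0.le
          · calc r * c τ s ≤ 1 * M :=
                mul_le_mul hr.2.le (hcM τ hτ s (hIocJ hs)) hcs.le zero_le_one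
              _ = M := one_mul M
          · exact mul_pos hm0 (pow_pos hR0 2)
          · exact mul_le_mul (hcm τ hτ r hrJ)
              (pow_le_pow_left₀ hR0.le ((hIocJ hs).1) 2) (pow_nonneg hR0.le 2) hcr.le
      have hbound := aux_integral_bound hr0' hr.2 ha0
        (le_of_lt (div_pos hM0 (mul_pos hm0 (pow_pos hR0 2)))) hPc hqc hP hq hqr
      calc alphaFun (c τ) r ≤ M / (m * R ^ 2) * (Real.sqrt a)⁻¹ * 2 := hbound
        _ < C := hCKα
    · -- Lfun bound
      have hPc : ContinuousOn (fun s => (c τ s)⁻¹) (Set.Ioc r 1) :=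
        ((hccont τ hτ).mono hIocJ).inv₀ (fun s hs => ne_of_gt (hpos τ hτ s (hIocJ hs)))
      have hP : ∀ s ∈ Set.Ioc r 1, 0 ≤ (c τ s)⁻¹ ∧ (c τ s)⁻¹ ≤ m⁻¹ := by
        intro s hs
        have hcs := hpos τ hτ s (hIocJ hs)
        exact ⟨(inv_pos.2 hcs).le, inv_anti₀ hm0 (hcm τ hτ s (hIocJ hs))⟩
      have hbound := aux_integral_bound hr0' hr.2 ha0 hminv.le hPc hqc hP hq hqr
      calc Lfun (c τ) r ≤ m⁻¹ * (Real.sqrt a)⁻¹ * 2 := hbound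
        _ < C := hCKL
  · have hrJ : r ∈ Set.Icc R 1 := ⟨hr.1.le, hr.2.le⟩
    have hsJ : s ∈ Set.Icc R 1 := ⟨hs.1.le, hs.2.le⟩
    have hd0 : 0 < s - r := sub_pos.2 hrs
    obtain ⟨hlow, hupp⟩ := hρMVT τ hτ r hrJ s hsJ hrs.le
    constructor
    · have h1 : (1:ℝ) < m₂ * C := by
        have h2 := mul_lt_mul_of_pos_left hCm₂ hm₂0
        rwa [mul_inv_cancel₀ (ne_of_gt hm₂0)] at h2
      have h3 : (s - r) / C < m₂ * (s - r) := by
        rw [div_lt_iff₀ hC0]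
        calc s - r = (s - r) * 1 := (mul_one _).symm
          _ < (s - r) * (m₂ * C) := by exact mul_lt_mul_of_pos_left h1 hd0
          _ = m₂ * (s - r) * C := by ring
      exact lt_of_lt_of_le h3 hlow
    · exact lt_of_le_of_lt hupp (mul_lt_mul_of_pos_right hCM₂ hd0)
end

section
/- Let 0 ≤ R < 1 and let c : [R,1] → (0,∞) be C^{1,1} and satisfy the Herglotz condition. If f : [R,1] → ℝ is continuous and Af(r) = 0 for every r in some dense subset of (R,1), where Af(r) = ∫_r^1 (f(s)/c(s)) · (1 − (r c(s)/(s c(r)))^2)^{-1/2} ds, then f vanishes identically on [R,1]. -/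
/-- The Abel-type transform of a radial function `f` over the maximal geodesic of
radius `r`. -/
noncomputable def Afun (c : ℝ → ℝ) (f : ℝ → ℝ) (r : ℝ) : ℝ :=
  ∫ s in r..1, (f s / c s) * (Real.sqrt (1 - (r * c s / (s * c r)) ^ 2))⁻¹

/-!
Put `p s = s / c s`; the Herglotz condition makes `p` strictly increasing, and
`Afun c f r = ∫ s in r..1, g s / √(p s ^ 2 - p r ^ 2)` with `g = f p / c`, a generalized Abel
transform. As `p' ≥ m > 0`, `p s ^ 2 - p r ^ 2 ≥ m p r (s - r)`, so the kernel is dominated by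
`(s - r) ^ (-1/2)` and the transform is continuous on `(R, 1)`; vanishing on a dense set, it
vanishes there. Multiplying by `p' r p r / √(p r ^ 2 - p t ^ 2)`, integrating over `r ∈ (t, 1]`
and exchanging the integrals, the inner integral
`∫ r in t..s, p' r p r / √((p r ^ 2 - p t ^ 2) (p s ^ 2 - p r ^ 2)) = π / 2`
(an arcsin primitive) leaves `π / 2 * ∫ s in t..1, g s = 0` for every `t`, hence `g = 0`.
-/

open Set MeasureTheory Real

noncomputable def abelKernel (p : ℝ → ℝ) (r s : ℝ) : ℝ := (√(p s ^ 2 - p r ^ 2))⁻¹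

noncomputable def abelTransform (p g : ℝ → ℝ) (b r : ℝ) : ℝ :=
  ∫ s in r..b, g s * abelKernel p r s

theorem abelKernel_nonneg (p : ℝ → ℝ) (r s : ℝ) : 0 ≤ abelKernel p r s :=
  inv_nonneg.2 (sqrt_nonneg _)

theorem abelTransform_eq_mul_integral (p g : ℝ → ℝ) (b r : ℝ) :
    abelTransform p g b r =
      (b - r) * ∫ τ in (0 : ℝ)..1, g (r + (b - r) * τ) * abelKernel p r (r + (b - r) * τ) := by
  rw [abelTransform, intervalIntegral.mul_integral_comp_add_mul
    (f := fun s => g s * abelKernel p r s), mul_zero, add_zero, mul_one, add_sub_cancel]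

theorem hasDerivAt_arcsin_affine {A B u : ℝ} (hu : u ∈ Ioo A B) :
    HasDerivAt (fun u => arcsin ((2 * u - A - B) / (B - A))) ((√(u - A))⁻¹ * (√(B - u))⁻¹) u := by
  have hBA : 0 < B - A := by linarith [hu.1, hu.2]
  have hX : HasDerivAt (fun u => (2 * u - A - B) / (B - A)) (2 / (B - A)) u := by
    simpa using (((hasDerivAt_id u).const_mul 2).sub_const A |>.sub_const B).div_const (B - A)
  have h₁ : (2 * u - A - B) / (B - A) ≠ -1 := by
    rw [ne_eq, div_eq_iff hBA.ne']; linarith [hu.1]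
  have h₂ : (2 * u - A - B) / (B - A) ≠ 1 := by
    rw [ne_eq, div_eq_iff hBA.ne']; linarith [hu.2]
  refine ((hasDerivAt_arcsin h₁ h₂).comp u hX).congr_deriv ?_
  have hA : 0 < u - A := sub_pos.2 hu.1
  have hB : 0 < B - u := sub_pos.2 hu.2
  have hsq : 1 - ((2 * u - A - B) / (B - A)) ^ 2 = (2 * √(u - A) * √(B - u) / (B - A)) ^ 2 := by
    rw [div_pow, div_pow, mul_pow, mul_pow, sq_sqrt hA.le, sq_sqrt hB.le]
    field_simp
    ring
  rw [hsq, sqrt_sq (by positivity)]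
  have := sqrt_pos.2 hA
  have := sqrt_pos.2 hB
  field_simp

theorem Ioc_inter_Iio_of_le {a b c : ℝ} (h : c ≤ b) : Ioc a b ∩ Iio c = Ioo a c := by
  ext x
  simp only [mem_inter_iff, mem_Ioc, mem_Iio, mem_Ioo]
  exact ⟨fun hx => ⟨hx.1.1, hx.2⟩, fun hx => ⟨⟨hx.1, hx.2.le.trans h⟩, hx.2⟩⟩

structure IsAbelProfile (a b : ℝ) (p p' : ℝ → ℝ) : Prop where
  hasDerivWithinAt : ∀ x ∈ Icc a b, HasDerivWithinAt p (p' x) (Icc a b) x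
  continuousOn_deriv : ContinuousOn p' (Icc a b)
  deriv_pos : ∀ x ∈ Icc a b, 0 < p' x
  nonneg_left : 0 ≤ p a

namespace IsAbelProfile

variable {a b m x y : ℝ} {p p' : ℝ → ℝ}

theorem continuousOn (hp : IsAbelProfile a b p p') : ContinuousOn p (Icc a b) :=
  fun x hx => (hp.hasDerivWithinAt x hx).continuousWithinAt

theorem hasDerivAt (hp : IsAbelProfile a b p p') (hx : x ∈ Ioo a b) : HasDerivAt p (p' x) x :=
  (hp.hasDerivWithinAt x (Ioo_subset_Icc_self hx)).hasDerivAt (Icc_mem_nhds hx.1 hx.2)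

theorem strictMonoOn (hp : IsAbelProfile a b p p') : StrictMonoOn p (Icc a b) :=
  strictMonoOn_of_hasDerivWithinAt_pos (convex_Icc a b) hp.continuousOn
    (fun x hx => (hp.hasDerivWithinAt x (interior_subset hx)).mono interior_subset)
    (fun x hx => hp.deriv_pos x (interior_subset hx))

theorem nonneg (hp : IsAbelProfile a b p p') (hx : x ∈ Icc a b) : 0 ≤ p x :=
  hp.nonneg_left.trans (hp.strictMonoOn.monotoneOn (left_mem_Icc.2 (hx.1.trans hx.2)) hx hx.1)

theorem pos (hp : IsAbelProfile a b p p') (hx : x ∈ Ioc a b) : 0 < p x :=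
  hp.nonneg_left.trans_lt (hp.strictMonoOn (left_mem_Icc.2 (hx.1.le.trans hx.2))
    (Ioc_subset_Icc_self hx) hx.1)

theorem sq_lt_sq (hp : IsAbelProfile a b p p') (hx : x ∈ Icc a b) (hy : y ∈ Icc a b)
    (hxy : x < y) : p x ^ 2 < p y ^ 2 :=
  pow_lt_pow_left₀ (hp.strictMonoOn hx hy hxy) (hp.nonneg hx) two_ne_zero

theorem exists_pos_le_deriv (hp : IsAbelProfile a b p p') :
    ∃ m, 0 < m ∧ ∀ x ∈ Icc a b, m ≤ p' x :=
  isCompact_Icc.exists_forall_le' hp.continuousOn_deriv hp.deriv_pos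

theorem sq_sub_sq_ge (hp : IsAbelProfile a b p p') (hm : ∀ x ∈ Icc a b, m ≤ p' x)
    {x₀ : ℝ} (hx₀ : x₀ ∈ Icc a b) (hx₀x : x₀ ≤ x) (hy : y ∈ Icc a b) (hxy : x ≤ y) :
    m * p x₀ * (y - x) ≤ p y ^ 2 - p x ^ 2 := by
  have hx : x ∈ Icc a b := ⟨hx₀.1.trans hx₀x, hxy.trans hy.2⟩
  have hgrowth : m * (y - x) ≤ p y - p x := by
    refine (convex_Icc a b).mul_sub_le_image_sub_of_le_deriv hp.continuousOn
      (fun z hz => ?_) (fun z hz => ?_) x hx y hy hxy <;> rw [interior_Icc] at hz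
    · exact (hp.hasDerivAt hz).differentiableAt.differentiableWithinAt
    · exact (hp.hasDerivAt hz).deriv ▸ hm z (Ioo_subset_Icc_self hz)
  have hpx₀ : p x₀ ≤ p y + p x :=
    (hp.strictMonoOn.monotoneOn hx₀ hx hx₀x).trans (le_add_of_nonneg_left (hp.nonneg hy))
  calc m * p x₀ * (y - x) = m * (y - x) * p x₀ := by ring
    _ ≤ (p y - p x) * (p y + p x) := mul_le_mul hgrowth hpx₀ (hp.nonneg hx₀)
        (sub_nonneg.2 (hp.strictMonoOn.monotoneOn hx hy hxy))
    _ = p y ^ 2 - p x ^ 2 := by ring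

theorem abelKernel_le (hp : IsAbelProfile a b p p') (hm0 : 0 < m) (hm : ∀ x ∈ Icc a b, m ≤ p' x)
    {x₀ : ℝ} (hx₀ : x₀ ∈ Ioc a b) (hx₀x : x₀ ≤ x) (hy : y ∈ Icc a b) (hxy : x < y) :
    abelKernel p x y ≤ (√(m * p x₀ * (y - x)))⁻¹ :=
  inv_anti₀ (sqrt_pos.2 (by have := hp.pos hx₀; have := sub_pos.2 hxy; positivity))
    (sqrt_le_sqrt (hp.sq_sub_sq_ge hm (Ioc_subset_Icc_self hx₀) hx₀x hy hxy.le))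

theorem continuousOn_abelKernel (hp : IsAbelProfile a b p p') :
    ContinuousOn (fun z : ℝ × ℝ => abelKernel p z.1 z.2)
      {z | z.1 ∈ Icc a b ∧ z.2 ∈ Icc a b ∧ z.1 < z.2} := by
  refine ContinuousOn.inv₀ (ContinuousOn.sqrt (ContinuousOn.sub ?_ ?_)) fun z hz => ?_
  · exact (hp.continuousOn.comp continuousOn_snd fun z hz => hz.2.1).pow 2
  · exact (hp.continuousOn.comp continuousOn_fst fun z hz => hz.1).pow 2
  · exact (sqrt_pos.2 (sub_pos.2 (hp.sq_lt_sq hz.1 hz.2.1 hz.2.2))).ne'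

theorem abelKernel_le_rpow (hp : IsAbelProfile a b p p') (hm0 : 0 < m)
    (hm : ∀ x ∈ Icc a b, m ≤ p' x) {x₀ y₀ r τ : ℝ} (hx₀ : x₀ ∈ Ioc a b) (hr : r ∈ Icc x₀ y₀)
    (hy₀ : y₀ < b) (hτ : τ ∈ Ioc 0 1) :
    abelKernel p r (r + (b - r) * τ) ≤ (√(m * p x₀ * (b - y₀)))⁻¹ * τ ^ (-(1 / 2) : ℝ) := by
  have hbr : 0 < b - r := by linarith [hr.2]
  have hby₀ : 0 < b - y₀ := sub_pos.2 hy₀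
  have hpx₀ := hp.pos hx₀
  have hτ0 := hτ.1
  have hs : r + (b - r) * τ ∈ Icc a b :=
    ⟨by nlinarith [hx₀.1, hr.1], by nlinarith [hτ.2]⟩
  calc abelKernel p r (r + (b - r) * τ) ≤ (√(m * p x₀ * ((b - r) * τ)))⁻¹ := by
        simpa using hp.abelKernel_le hm0 hm hx₀ hr.1 hs (by nlinarith)
    _ ≤ (√(m * p x₀ * (b - y₀) * τ))⁻¹ := by
        refine inv_anti₀ (sqrt_pos.2 (by positivity)) (sqrt_le_sqrt ?_)
        rw [mul_assoc _ (b - y₀)]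
        gcongr
        exact hr.2
    _ = (√(m * p x₀ * (b - y₀)))⁻¹ * τ ^ (-(1 / 2) : ℝ) := by
        rw [sqrt_mul (by positivity), mul_inv, sqrt_eq_rpow τ, ← rpow_neg hτ0.le]

theorem continuousOn_abelTransform (hp : IsAbelProfile a b p p') {g : ℝ → ℝ}
    (hg : ContinuousOn g (Icc a b)) : ContinuousOn (abelTransform p g b) (Ioo a b) := by
  intro r₀ hr₀
  obtain ⟨m, hm0, hm⟩ := hp.exists_pos_le_deriv
  set F : ℝ → ℝ → ℝ := fun r τ => g (r + (b - r) * τ) * abelKernel p r (r + (b - r) * τ)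
  have hmem : ∀ r ∈ Ioo a b, ∀ τ ∈ Ioc (0 : ℝ) 1,
      r + (b - r) * τ ∈ Icc a b ∧ r < r + (b - r) * τ := by
    intro r hr τ hτ
    have : 0 < (b - r) * τ := mul_pos (sub_pos.2 hr.2) hτ.1
    exact ⟨⟨by linarith [hr.1], by nlinarith [hr.2, hτ.2]⟩, by linarith⟩
  have hFcont : ContinuousOn (Function.uncurry F) (Ioo a b ×ˢ Ioc 0 1) := by
    have hσ : Continuous fun z : ℝ × ℝ => z.1 + (b - z.1) * z.2 := by fun_prop
    refine (hg.comp hσ.continuousOn fun z hz => (hmem _ hz.1 _ hz.2).1).mul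
      (hp.continuousOn_abelKernel.comp (continuous_fst.prodMk hσ).continuousOn fun z hz => ?_)
    obtain ⟨hs, hrs⟩ := hmem _ hz.1 _ hz.2
    exact ⟨Ioo_subset_Icc_self hz.1, hs, hrs⟩
  obtain ⟨x₀, hax₀, hx₀r₀⟩ := exists_between hr₀.1
  obtain ⟨y₀, hr₀y₀, hy₀b⟩ := exists_between hr₀.2
  have hx₀ : x₀ ∈ Ioc a b := ⟨hax₀, by linarith [hr₀.2]⟩
  obtain ⟨Cg, hCg⟩ := isCompact_Icc.exists_bound_of_continuousOn hg
  have hbound : ∀ r ∈ Ioo x₀ y₀, ∀ τ ∈ Ioc (0 : ℝ) 1,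
      ‖F r τ‖ ≤ Cg * ((√(m * p x₀ * (b - y₀)))⁻¹ * τ ^ (-(1 / 2) : ℝ)) := by
    intro r hr τ hτ
    obtain ⟨hs, -⟩ := hmem r ⟨hax₀.trans hr.1, hr.2.trans hy₀b⟩ τ hτ
    rw [norm_mul, Real.norm_of_nonneg (abelKernel_nonneg _ _ _)]
    exact mul_le_mul (hCg _ hs) (hp.abelKernel_le_rpow hm0 hm hx₀ (Ioo_subset_Icc_self hr) hy₀b hτ)
      (abelKernel_nonneg _ _ _) ((norm_nonneg _).trans (hCg _ hs))
  have hcont : ContinuousWithinAt (fun r => (b - r) * ∫ τ in (0 : ℝ)..1, F r τ) (Ioo a b) r₀ := by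
    refine (continuous_const.sub continuous_id).continuousWithinAt.mul
      (intervalIntegral.continuousWithinAt_of_dominated_interval ?_ ?_
        ((intervalIntegral.intervalIntegrable_rpow' (r := -(1 / 2)) (by norm_num)).const_mul
          (√(m * p x₀ * (b - y₀)))⁻¹ |>.const_mul Cg) ?_)
    · filter_upwards [self_mem_nhdsWithin] with r hr
      rw [uIoc_of_le zero_le_one]
      exact (hFcont.uncurry_left r hr).aestronglyMeasurable measurableSet_Ioc
    · filter_upwards [nhdsWithin_le_nhds (Ioo_mem_nhds hx₀r₀ hr₀y₀)] with r hr
      refine Filter.Eventually.of_forall fun τ hτ => hbound r hr τ ?_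
      rwa [uIoc_of_le zero_le_one] at hτ
    · refine Filter.Eventually.of_forall fun τ hτ => hFcont.uncurry_right τ ?_ r₀ hr₀
      rwa [uIoc_of_le zero_le_one] at hτ
  exact hcont.congr (fun r _ => abelTransform_eq_mul_integral p g b r)
    (abelTransform_eq_mul_integral p g b r₀)

theorem continuousOn_half_arcsin (hp : IsAbelProfile a b p p') {t s : ℝ} (ht : a ≤ t)
    (hs : s ≤ b) :
    ContinuousOn (fun r => arcsin ((2 * p r ^ 2 - p t ^ 2 - p s ^ 2) / (p s ^ 2 - p t ^ 2)) / 2)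
      (Icc t s) := by
  have := hp.continuousOn.mono (Icc_subset_Icc ht hs)
  fun_prop

theorem hasDerivAt_half_arcsin (hp : IsAbelProfile a b p p') {t s r : ℝ} (ht : t ∈ Icc a b)
    (hs : s ∈ Icc a b) (hr : r ∈ Ioo t s) :
    HasDerivAt (fun r => arcsin ((2 * p r ^ 2 - p t ^ 2 - p s ^ 2) / (p s ^ 2 - p t ^ 2)) / 2)
      (p' r * p r * (abelKernel p t r * abelKernel p r s)) r := by
  have hrI : r ∈ Icc a b := ⟨ht.1.trans hr.1.le, hr.2.le.trans hs.2⟩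
  have hu : p r ^ 2 ∈ Ioo (p t ^ 2) (p s ^ 2) :=
    ⟨hp.sq_lt_sq ht hrI hr.1, hp.sq_lt_sq hrI hs hr.2⟩
  have hpr : HasDerivAt p (p' r) r := hp.hasDerivAt ⟨ht.1.trans_lt hr.1, hr.2.trans_le hs.2⟩
  refine (((hasDerivAt_arcsin_affine hu).comp r (hpr.pow 2)).div_const 2).congr_deriv ?_
  simp only [abelKernel]
  push_cast
  ring

theorem mul_abelKernel_mul_abelKernel_nonneg (hp : IsAbelProfile a b p p') (hx : x ∈ Icc a b)
    (t s : ℝ) : 0 ≤ p' x * p x * (abelKernel p t x * abelKernel p x s) := by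
  have := hp.deriv_pos x hx
  have := hp.nonneg hx
  have := abelKernel_nonneg p t x
  have := abelKernel_nonneg p x s
  positivity

theorem integrableOn_abelKernel_mul_abelKernel (hp : IsAbelProfile a b p p') {t s : ℝ}
    (ht : t ∈ Icc a b) (hs : s ∈ Icc a b) :
    IntegrableOn (fun r => p' r * p r * (abelKernel p t r * abelKernel p r s)) (Ioc t s) :=
  intervalIntegral.integrableOn_deriv_of_nonneg (hp.continuousOn_half_arcsin ht.1 hs.2)
    (fun _ hr => hp.hasDerivAt_half_arcsin ht hs hr) fun _ hr =>
      hp.mul_abelKernel_mul_abelKernel_nonneg ⟨ht.1.trans hr.1.le, hr.2.le.trans hs.2⟩ t s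

theorem integral_abelKernel_mul_abelKernel (hp : IsAbelProfile a b p p') {t s : ℝ}
    (ht : t ∈ Icc a b) (hs : s ∈ Icc a b) (hts : t < s) :
    ∫ r in t..s, p' r * p r * (abelKernel p t r * abelKernel p r s) = π / 2 := by
  rw [intervalIntegral.integral_eq_sub_of_hasDerivAt_of_le hts.le
    (hp.continuousOn_half_arcsin ht.1 hs.2) (fun _ hr => hp.hasDerivAt_half_arcsin ht hs hr)
    ((intervalIntegrable_iff_integrableOn_Ioc_of_le hts.le).2
      (hp.integrableOn_abelKernel_mul_abelKernel ht hs))]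
  have hts' := sub_pos.2 (hp.sq_lt_sq ht hs hts)
  rw [show 2 * p s ^ 2 - p t ^ 2 - p s ^ 2 = p s ^ 2 - p t ^ 2 by ring,
    show 2 * p t ^ 2 - p t ^ 2 - p s ^ 2 = -(p s ^ 2 - p t ^ 2) by ring, neg_div,
    div_self hts'.ne', arcsin_one, arcsin_neg, arcsin_one]
  ring

theorem setIntegral_Ioo_abelKernel_mul_abelKernel (hp : IsAbelProfile a b p p') {t s : ℝ}
    (ht : t ∈ Icc a b) (hs : s ∈ Icc a b) (hts : t < s) :
    ∫ r in Ioo t s, p' r * p r * (abelKernel p t r * abelKernel p r s) = π / 2 := by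
  rw [← integral_Ioc_eq_integral_Ioo, ← intervalIntegral.integral_of_le hts.le,
    hp.integral_abelKernel_mul_abelKernel ht hs hts]

theorem continuousOn_mul_abelKernel_mul_abelKernel (hp : IsAbelProfile a b p p') {g : ℝ → ℝ}
    (hg : ContinuousOn g (Icc a b)) {t : ℝ} (ht : t ∈ Icc a b) :
    ContinuousOn (fun z : ℝ × ℝ =>
        p' z.1 * p z.1 * abelKernel p t z.1 * (g z.2 * abelKernel p z.1 z.2))
      ({z | z.1 < z.2} ∩ Ioc t b ×ˢ Ioc t b) := by
  have hsub : Ioc t b ⊆ Icc a b := fun x hx => ⟨ht.1.trans hx.1.le, hx.2⟩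
  have hK := hp.continuousOn_abelKernel
  refine ((ContinuousOn.mul ?_ ?_).mul ?_).mul (ContinuousOn.mul ?_ ?_)
  · exact hp.continuousOn_deriv.comp continuous_fst.continuousOn fun z hz => hsub hz.2.1
  · exact hp.continuousOn.comp continuous_fst.continuousOn fun z hz => hsub hz.2.1
  · exact hK.comp (continuous_const.prodMk continuous_fst).continuousOn
      fun z hz => ⟨ht, hsub hz.2.1, hz.2.1.1⟩
  · exact hg.comp continuous_snd.continuousOn fun z hz => hsub hz.2.2
  · exact hK.mono fun z hz => ⟨hsub hz.2.1, hsub hz.2.2, hz.1⟩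

theorem integrable_indicator_abelKernel_mul_abelKernel (hp : IsAbelProfile a b p p')
    {g : ℝ → ℝ} (hg : ContinuousOn g (Icc a b)) {t : ℝ} (ht : t ∈ Icc a b) :
    Integrable ({z : ℝ × ℝ | z.1 < z.2}.indicator fun z =>
        p' z.1 * p z.1 * abelKernel p t z.1 * (g z.2 * abelKernel p z.1 z.2))
      ((volume.restrict (Ioc t b)).prod (volume.restrict (Ioc t b))) := by
  set F : ℝ × ℝ → ℝ := {z : ℝ × ℝ | z.1 < z.2}.indicator fun z =>
    p' z.1 * p z.1 * abelKernel p t z.1 * (g z.2 * abelKernel p z.1 z.2)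
  have hsub : Ioc t b ⊆ Icc a b := fun x hx => ⟨ht.1.trans hx.1.le, hx.2⟩
  have hFs : ∀ r s, F (r, s) = (Iio s).indicator
      (fun r => g s * (p' r * p r * (abelKernel p t r * abelKernel p r s))) r := by
    intro r s
    change (Ioi r).indicator (fun s => p' r * p r * abelKernel p t r * (g s * abelKernel p r s)) s
      = _
    simp only [indicator_apply, mem_Ioi, mem_Iio]
    split_ifs <;> ring
  have hU : MeasurableSet {z : ℝ × ℝ | z.1 < z.2} :=
    measurableSet_lt measurable_fst measurable_snd
  have hF_meas : AEStronglyMeasurable F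
      ((volume.restrict (Ioc t b)).prod (volume.restrict (Ioc t b))) := by
    rw [aestronglyMeasurable_indicator_iff hU, Measure.prod_restrict, Measure.restrict_restrict hU]
    exact (hp.continuousOn_mul_abelKernel_mul_abelKernel hg ht).aestronglyMeasurable
      (hU.inter (measurableSet_Ioc.prod measurableSet_Ioc))
  refine (integrable_prod_iff' hF_meas).2 ⟨?_, ?_⟩
  · filter_upwards [ae_restrict_mem measurableSet_Ioc] with s hs
    simp only [hFs]
    rw [← IntegrableOn, integrableOn_indicator_iff measurableSet_Iio, inter_comm,
      Ioc_inter_Iio_of_le hs.2]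
    exact ((hp.integrableOn_abelKernel_mul_abelKernel ht (hsub hs)).mono_set
      Ioo_subset_Ioc_self).const_mul (g s)
  · refine Integrable.congr (f := fun s => ‖g s‖ * (π / 2)) ?_ ?_
    · exact ((hg.mono (Icc_subset_Icc ht.1 le_rfl)).norm.mul continuousOn_const).integrableOn_Icc
        |>.mono_set Ioc_subset_Icc_self
    filter_upwards [ae_restrict_mem measurableSet_Ioc] with s hs
    simp only [hFs, norm_indicator_eq_indicator_norm]
    rw [setIntegral_indicator measurableSet_Iio, Ioc_inter_Iio_of_le hs.2,
      ← hp.setIntegral_Ioo_abelKernel_mul_abelKernel ht (hsub hs) hs.1, ← integral_const_mul]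
    refine setIntegral_congr_fun measurableSet_Ioo fun r hr => ?_
    rw [norm_mul, Real.norm_of_nonneg (hp.mul_abelKernel_mul_abelKernel_nonneg
      (hsub ⟨hr.1, hr.2.le.trans hs.2⟩) t s)]

theorem integral_mul_abelTransform (hp : IsAbelProfile a b p p') {g : ℝ → ℝ}
    (hg : ContinuousOn g (Icc a b)) {t : ℝ} (ht : t ∈ Icc a b) :
    ∫ r in Ioc t b, p' r * p r * abelKernel p t r * abelTransform p g b r =
      π / 2 * ∫ s in Ioc t b, g s := by
  set F : ℝ × ℝ → ℝ := {z : ℝ × ℝ | z.1 < z.2}.indicator fun z =>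
    p' z.1 * p z.1 * abelKernel p t z.1 * (g z.2 * abelKernel p z.1 z.2)
  have hsub : Ioc t b ⊆ Icc a b := fun x hx => ⟨ht.1.trans hx.1.le, hx.2⟩
  calc ∫ r in Ioc t b, p' r * p r * abelKernel p t r * abelTransform p g b r
        = ∫ r in Ioc t b, ∫ s in Ioc t b, F (r, s) := by
        refine setIntegral_congr_fun measurableSet_Ioc fun r hr => ?_
        change _ = ∫ s in Ioc t b, (Ioi r).indicator
          (fun s => p' r * p r * abelKernel p t r * (g s * abelKernel p r s)) s
        rw [setIntegral_indicator measurableSet_Ioi, Ioc_inter_Ioi, sup_eq_right.2 hr.1.le,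
          integral_const_mul, abelTransform, intervalIntegral.integral_of_le hr.2]
    _ = ∫ s in Ioc t b, ∫ r in Ioc t b, F (r, s) := integral_integral_swap
        (f := fun r s => F (r, s)) (hp.integrable_indicator_abelKernel_mul_abelKernel hg ht)
    _ = ∫ s in Ioc t b, π / 2 * g s := by
        refine setIntegral_congr_fun measurableSet_Ioc fun s hs => ?_
        change ∫ r in Ioc t b, (Iio s).indicator
          (fun r => p' r * p r * abelKernel p t r * (g s * abelKernel p r s)) r = _
        rw [setIntegral_indicator measurableSet_Iio, Ioc_inter_Iio_of_le hs.2,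
          ← hp.setIntegral_Ioo_abelKernel_mul_abelKernel ht (hsub hs) hs.1, ← integral_mul_const]
        refine setIntegral_congr_fun measurableSet_Ioo fun r _ => ?_
        ring
    _ = π / 2 * ∫ s in Ioc t b, g s := integral_const_mul _ _

theorem eqOn_zero_of_abelTransform_eq_zero (hp : IsAbelProfile a b p p') {g : ℝ → ℝ}
    (hg : ContinuousOn g (Icc a b)) (hA : EqOn (abelTransform p g b) 0 (Ioo a b)) :
    EqOn g 0 (Ioo a b) := by
  have htail : ∀ t ∈ Ioo a b, ∫ s in t..b, g s = 0 := by
    intro t ht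
    have h := hp.integral_mul_abelTransform hg (Ioo_subset_Icc_self ht)
    rw [integral_Ioc_eq_integral_Ioo, setIntegral_congr_fun measurableSet_Ioo
      (g := fun _ => 0) fun r hr => by rw [hA ⟨ht.1.trans hr.1, hr.2⟩, Pi.zero_apply, mul_zero],
      integral_zero] at h
    rw [intervalIntegral.integral_of_le ht.2.le]
    exact (mul_eq_zero.1 h.symm).resolve_left (by positivity)
  intro x hx
  have hderiv : HasDerivAt (fun u => ∫ s in u..b, g s) (-g x) x :=
    intervalIntegral.integral_hasDerivAt_left
      ((hg.mono (Icc_subset_Icc hx.1.le le_rfl)).intervalIntegrable_of_Icc hx.2.le)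
      ((hg.mono Ioo_subset_Icc_self).stronglyMeasurableAtFilter isOpen_Ioo x hx)
      (hg.continuousAt (Icc_mem_nhds hx.1 hx.2))
  have hzero : (fun u => ∫ s in u..b, g s) =ᶠ[nhds x] fun _ => 0 :=
    Filter.eventually_of_mem (isOpen_Ioo.mem_nhds hx) htail
  simpa using (hderiv.congr_of_eventuallyEq hzero.symm).unique (hasDerivAt_const x 0)

end IsAbelProfile

variable {R : ℝ} {c : ℝ → ℝ}

theorem IsC11On.continuousOn (hc : IsC11On c R) : ContinuousOn c (Icc R 1) := by
  obtain ⟨c', K, hderiv, -⟩ := hc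
  exact fun r hr => (hderiv r hr).continuousWithinAt

theorem IsC11On.isAbelProfile (hR0 : 0 ≤ R) (hR1 : R < 1) (hpos : ∀ r ∈ Icc R 1, 0 < c r)
    (hc : IsC11On c R) (hHerg : HerglotzCond c R) :
    ∃ p', IsAbelProfile R 1 (fun s => s / c s) p' := by
  obtain ⟨c', K, hderiv, hlip⟩ := id hc
  have hquot : ∀ r ∈ Icc R 1, HasDerivWithinAt (fun s => s / c s)
      ((1 * c r - r * c' r) / c r ^ 2) (Icc R 1) r :=
    fun r hr => (hasDerivWithinAt_id r _).div (hderiv r hr) (hpos r hr).ne'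
  refine ⟨_, hquot, ?_, fun r hr => ?_, div_nonneg hR0 (hpos R ⟨le_rfl, hR1.le⟩).le⟩
  · exact ((continuousOn_const.mul hc.continuousOn).sub (continuousOn_id.mul hlip.continuousOn)).div
      (hc.continuousOn.pow 2) fun r hr => pow_ne_zero 2 (hpos r hr).ne'
  · exact (hquot r hr).derivWithin (uniqueDiffOn_Icc hR1 r hr) ▸ hHerg r hr

theorem Afun_eq_abelTransform (hR0 : 0 ≤ R) (hpos : ∀ r ∈ Icc R 1, 0 < c r) (f : ℝ → ℝ)
    {r : ℝ} (hr : r ∈ Icc R 1) :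
    Afun c f r = abelTransform (fun s => s / c s) (fun s => f s / c s * (s / c s)) 1 r := by
  refine intervalIntegral.integral_congr_ae (Filter.Eventually.of_forall fun s hs => ?_)
  rw [uIoc_of_le hr.2] at hs
  have hs0 : 0 < s := (hR0.trans hr.1).trans_lt hs.1
  have hcs := hpos s ⟨hr.1.trans hs.1.le, hs.2⟩
  have hcr := hpos r hr
  have hps : 0 < s / c s := div_pos hs0 hcs
  have hratio :
      1 - (r * c s / (s * c r)) ^ 2 = ((s / c s) ^ 2 - (r / c r) ^ 2) / (s / c s) ^ 2 := by
    field_simp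
  rw [abelKernel, hratio, sqrt_div' _ (sq_nonneg _), sqrt_sq hps.le, inv_div]
  ring

theorem stmt10 (R : ℝ) (hR0 : 0 ≤ R) (hR1 : R < 1) (c : ℝ → ℝ)
    (hpos : ∀ r ∈ Set.Icc R 1, 0 < c r)
    (hC11 : IsC11On c R) (hHerg : HerglotzCond c R)
    (f : ℝ → ℝ) (hf : ContinuousOn f (Set.Icc R 1))
    (D : Set ℝ) (hD : D ⊆ Set.Ioo R 1) (hDdense : Set.Ioo R 1 ⊆ closure D)
    (hAf : ∀ r ∈ D, Afun c f r = 0) :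
    ∀ r ∈ Set.Icc R 1, f r = 0 := by
  obtain ⟨p', hp⟩ := hC11.isAbelProfile hR0 hR1 hpos hHerg
  set g : ℝ → ℝ := fun s => f s / c s * (s / c s)
  have hg : ContinuousOn g (Icc R 1) :=
    (hf.div hC11.continuousOn fun r hr => (hpos r hr).ne').mul hp.continuousOn
  have hA : EqOn (abelTransform (fun s => s / c s) g 1) 0 (Ioo R 1) :=
    EqOn.of_subset_closure (fun r hr => (Afun_eq_abelTransform hR0 hpos f
      (Ioo_subset_Icc_self (hD hr))).symm.trans (hAf r hr))
      (hp.continuousOn_abelTransform hg) continuousOn_const hD hDdense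
  have hf0 : EqOn f 0 (Ioo R 1) := fun r hr => by
    have hr' : r ∈ Icc R 1 := Ioo_subset_Icc_self hr
    simpa [g, (hpos r hr').ne', (hR0.trans_lt hr.1).ne'] using
      hp.eqOn_zero_of_abelTransform_eq_zero hg hA hr
  exact hf0.of_subset_closure hf continuousOn_const Ioo_subset_Icc_self
    (closure_Ioo hR1.ne).symm.subset
end

section
/- Let 0 < R < 1 and let c : [R,1] → (0,∞) be C^{1,1} and satisfy the Herglotz condition. Then the set of lengths of periodic broken rays reflecting at the inner boundary, {2·n·T(z) : z ∈ (0, R/c(R)), n and m positive coprime integers with n·β(z) = m·π}, is countable. No assumption on conjugate points is made. -/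
/-- The length spectrum (without inner reflections): lengths `2 n L(r)` of periodic
broken rays, where the broken ray of radius `r` closes up after `n` reflections and
`m` windings, `n, m` coprime positive integers with `n α(r) = m π`. -/
noncomputable def lsp (c : ℝ → ℝ) (R : ℝ) : Set ℝ :=
  {ℓ | ∃ r ∈ Set.Ioo R 1, ∃ n m : ℕ, 0 < n ∧ 0 < m ∧ Nat.Coprime n m ∧
        (n : ℝ) * alphaFun c r = (m : ℝ) * Real.pi ∧ ℓ = 2 * (n : ℝ) * Lfun c r}

/-- The angular advance `β(z)` of a geodesic segment from the inner boundary `r = R`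
to the outer boundary `r = 1` with angular momentum `z`. -/
noncomputable def betaFun (c : ℝ → ℝ) (R : ℝ) (z : ℝ) : ℝ :=
  ∫ r in R..1, (z * c r / r ^ 2) * (Real.sqrt (1 - (z * c r / r) ^ 2))⁻¹

/-- The travel time `T(z)` of a geodesic segment from the inner boundary to the outer
boundary with angular momentum `z`. -/
noncomputable def Tfun (c : ℝ → ℝ) (R : ℝ) (z : ℝ) : ℝ :=
  ∫ r in R..1, (c r)⁻¹ * (Real.sqrt (1 - (z * c r / r) ^ 2))⁻¹

/-- The length spectrum including broken rays reflecting at the inner boundary. -/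
noncomputable def lsp' (c : ℝ → ℝ) (R : ℝ) : Set ℝ :=
  lsp c R ∪
    {ℓ | ∃ z : ℝ, 0 < z ∧ z < R / c R ∧ ∃ n m : ℕ, 0 < n ∧ 0 < m ∧ Nat.Coprime n m ∧
      (n : ℝ) * betaFun c R z = (m : ℝ) * Real.pi ∧ ℓ = 2 * (n : ℝ) * Tfun c R z}

open Set Real

lemma aux_pt_lt {r a1 a2 : ℝ} (hr : 0 < r) (ha1 : 0 < a1) (h12 : a1 < a2) (ha2 : a2 < 1) :
    a1 / r * (Real.sqrt (1 - a1 ^ 2))⁻¹ < a2 / r * (Real.sqrt (1 - a2 ^ 2))⁻¹ := by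
  have h1 : 0 < 1 - a2 ^ 2 := by nlinarith
  have h2 : 1 - a2 ^ 2 < 1 - a1 ^ 2 := by nlinarith
  have hb2 : 0 < Real.sqrt (1 - a2 ^ 2) := Real.sqrt_pos.mpr h1
  have hb : Real.sqrt (1 - a2 ^ 2) < Real.sqrt (1 - a1 ^ 2) := Real.sqrt_lt_sqrt h1.le h2
  have hinv : (Real.sqrt (1 - a1 ^ 2))⁻¹ < (Real.sqrt (1 - a2 ^ 2))⁻¹ := by
    gcongr
  have hdiv : a1 / r < a2 / r := by gcongr
  exact mul_lt_mul'' hdiv hinv (by positivity) (by positivity)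

lemma beta_strictMono (R : ℝ) (hR0 : 0 < R) (hR1 : R < 1) (c : ℝ → ℝ)
    (hpos : ∀ r ∈ Set.Icc R 1, 0 < c r)
    (hC11 : ∃ c' : ℝ → ℝ, ∃ K : NNReal,
      (∀ r ∈ Set.Icc R 1, HasDerivWithinAt c (c' r) (Set.Icc R 1) r) ∧
      LipschitzOnWith K c' (Set.Icc R 1))
    (hHerg : ∀ r ∈ Set.Icc R 1, 0 < derivWithin (fun s => s / c s) (Set.Icc R 1) r)
    {z1 z2 : ℝ} (hz1 : 0 < z1) (hz2 : z2 < R / c R) (h12 : z1 < z2) :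
    (∫ r in R..1, (z1 * c r / r ^ 2) * (Real.sqrt (1 - (z1 * c r / r) ^ 2))⁻¹) <
    ∫ r in R..1, (z2 * c r / r ^ 2) * (Real.sqrt (1 - (z2 * c r / r) ^ 2))⁻¹ := by
  obtain ⟨c', K, hd, _⟩ := hC11
  have hc : ContinuousOn c (Icc R 1) := fun r hr => (hd r hr).continuousWithinAt
  have hmono : StrictMonoOn (fun s => s / c s) (Icc R 1) := by
    apply strictMonoOn_of_deriv_pos (convex_Icc R 1)
    · exact continuousOn_id.div hc (fun r hr => (hpos r hr).ne')
    · intro x hx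
      rw [interior_Icc] at hx
      have := hHerg x (Ioo_subset_Icc_self hx)
      rwa [derivWithin_of_mem_nhds (Icc_mem_nhds hx.1 hx.2)] at this
  have hRmem : R ∈ Icc R 1 := ⟨le_refl R, hR1.le⟩
  have hkey : ∀ z, 0 < z → z < R / c R → ∀ r ∈ Icc R 1,
      0 < z * c r / r ∧ z * c r / r < 1 := by
    intro z hz hzR r hr
    have hr0 : 0 < r := lt_of_lt_of_le hR0 hr.1
    have hcr : 0 < c r := hpos r hr
    refine ⟨by positivity, ?_⟩
    have h1 : z < r / c r := by
      rcases eq_or_lt_of_le hr.1 with h | h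
      · simpa [← h] using hzR
      · exact hzR.trans (hmono hRmem hr h)
    rw [div_lt_one hr0]
    calc z * c r < (r / c r) * c r := mul_lt_mul_of_pos_right h1 hcr
      _ = r := by field_simp
  have hz2' : 0 < z2 := hz1.trans h12
  have hz1' : z1 < R / c R := h12.trans hz2
  have hcont : ∀ z, 0 < z → z < R / c R →
      ContinuousOn (fun r => (z * c r / r ^ 2) * (Real.sqrt (1 - (z * c r / r) ^ 2))⁻¹)
        (Icc R 1) := by
    intro z hz hzR
    have hrne : ∀ r ∈ Icc R 1, r ≠ 0 := fun r hr => (lt_of_lt_of_le hR0 hr.1).ne'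
    apply ContinuousOn.mul
    · exact (continuousOn_const.mul hc).div (continuousOn_id.pow 2)
        (fun r hr => pow_ne_zero 2 (hrne r hr))
    · apply ContinuousOn.inv₀
      · exact (continuousOn_const.sub (((continuousOn_const.mul hc).div continuousOn_id
          (fun r hr => hrne r hr)).pow 2)).sqrt
      · intro r hr
        obtain ⟨h1, h2⟩ := hkey z hz hzR r hr
        have h3 : 0 < 1 - (z * c r / r) ^ 2 := by nlinarith
        positivity
  have hlt : ∀ r ∈ Icc R 1,
      (z1 * c r / r ^ 2) * (Real.sqrt (1 - (z1 * c r / r) ^ 2))⁻¹ <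
      (z2 * c r / r ^ 2) * (Real.sqrt (1 - (z2 * c r / r) ^ 2))⁻¹ := by
    intro r hr
    have hr0 : 0 < r := lt_of_lt_of_le hR0 hr.1
    have hcr : 0 < c r := hpos r hr
    obtain ⟨h11, h12'⟩ := hkey z1 hz1 hz1' r hr
    obtain ⟨h21, h22⟩ := hkey z2 hz2' hz2 r hr
    have ha : z1 * c r / r < z2 * c r / r := by gcongr
    have hform : ∀ z : ℝ, z * c r / r ^ 2 = (z * c r / r) / r := by intro z; ring
    rw [hform z1, hform z2]
    exact aux_pt_lt hr0 h11 ha h22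
  exact intervalIntegral.integral_lt_integral_of_continuousOn_of_le_of_exists_lt hR1
    (hcont z1 hz1 hz1') (hcont z2 hz2' hz2)
    (fun r hr => (hlt r ⟨hr.1.le, hr.2⟩).le)
    ⟨R, hRmem, hlt R hRmem⟩

theorem stmt14 (R : ℝ) (hR0 : 0 < R) (hR1 : R < 1) (c : ℝ → ℝ)
    (hpos : ∀ r ∈ Set.Icc R 1, 0 < c r)
    (hC11 : IsC11On c R) (hHerg : HerglotzCond c R) :
    {ℓ : ℝ | ∃ z : ℝ, 0 < z ∧ z < R / c R ∧ ∃ n m : ℕ, 0 < n ∧ 0 < m ∧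
      Nat.Coprime n m ∧ (n : ℝ) * betaFun c R z = (m : ℝ) * Real.pi ∧
      ℓ = 2 * (n : ℝ) * Tfun c R z}.Countable := by
  have hinj : ∀ z1 z2 : ℝ, 0 < z1 → z1 < R / c R → 0 < z2 → z2 < R / c R →
      betaFun c R z1 = betaFun c R z2 → z1 = z2 := by
    intro z1 z2 h1 h1' h2 h2' heq
    by_contra hne
    rcases lt_or_gt_of_ne hne with h | h
    · exact absurd heq (ne_of_lt (beta_strictMono R hR0 hR1 c hpos hC11 hHerg h1 h2' h))
    · exact absurd heq.symm
        (ne_of_lt (beta_strictMono R hR0 hR1 c hpos hC11 hHerg h2 h1' h))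
  have hsub : {ℓ : ℝ | ∃ z : ℝ, 0 < z ∧ z < R / c R ∧ ∃ n m : ℕ, 0 < n ∧ 0 < m ∧
      Nat.Coprime n m ∧ (n : ℝ) * betaFun c R z = (m : ℝ) * Real.pi ∧
      ℓ = 2 * (n : ℝ) * Tfun c R z} ⊆
      ⋃ p : ℕ × ℕ, {ℓ : ℝ | ∃ z : ℝ, 0 < z ∧ z < R / c R ∧ 0 < p.1 ∧
        (p.1 : ℝ) * betaFun c R z = (p.2 : ℝ) * Real.pi ∧
        ℓ = 2 * (p.1 : ℝ) * Tfun c R z} := by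
    rintro ℓ ⟨z, hz0, hzR, n, m, hn, hm, hcop, heq, hl⟩
    exact Set.mem_iUnion.mpr ⟨(n, m), z, hz0, hzR, hn, heq, hl⟩
  apply Set.Countable.mono hsub
  apply Set.countable_iUnion
  intro p
  apply Set.Subsingleton.countable
  rintro ℓ1 ⟨x, hx0, hxR, hn, hbx, hlx⟩ ℓ2 ⟨y, hy0, hyR, _, hby, hly⟩
  have hne : (p.1 : ℝ) ≠ 0 := Nat.cast_ne_zero.mpr hn.ne'
  have hbeq : betaFun c R x = betaFun c R y :=
    mul_left_cancel₀ hne (hbx.trans hby.symm)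
  have hxy : x = y := hinj x y hx0 hxR hy0 hyR hbeq
  rw [hlx, hly, hxy]
end
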